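/- For every τ ∈ ℍ₃ one has the theta-constant relation r₀₀(τ) = r₀₁(τ) + r₁₀(τ) (relation (6)). -/

import Mathlib

open scoped BigOperators
open Complex Matrix Filter

noncomputable section

attribute [local instance] Matrix.normedAddCommGroup Matrix.normedSpace

/-- The Siegel upper half space of degree `g`: complex symmetric `g × g` matrices
whose imaginary part is positive definite. -/
def Hg (g : ℕ) : Set (Matrix (Fin g) (Fin g) ℂ) :=
  {τ | τ.IsSymm ∧ (Matrix.of fun i j => (τ i j).im).PosDef}

/-- Theta function with (integer row vector) characteristics `[a; b]`. -/
def thetaFn (g : ℕ) (a b : Fin g → ℤ) (τ : Matrix (Fin g) (Fin g) ℂ)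
    (z : Fin g → ℂ) : ℂ :=
  ∑' l : Fin g → ℤ,
    Complex.exp ((Real.pi : ℂ) * Complex.I *
        ∑ i, ∑ j, ((l i : ℂ) + (a i : ℂ) / 2) * τ i j * ((l j : ℂ) + (a j : ℂ) / 2)) *
    Complex.exp (2 * (Real.pi : ℂ) * Complex.I *
        ∑ i, ((l i : ℂ) + (a i : ℂ) / 2) * (z i + (b i : ℂ) / 2))

/-- Theta constant with characteristics `[a; b]`. -/
def thetaNull (g : ℕ) (a b : Fin g → ℤ) (τ : Matrix (Fin g) (Fin g) ℂ) : ℂ :=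
  thetaFn g a b τ 0

/-- The block matrix `[[τ', zᵀ], [z, t]]` built from `τ' ∈ ℍ₃`, a row vector
`z ∈ ℂ³` and `t ∈ ℍ₁`. -/
def blk (τ' : Matrix (Fin 3) (Fin 3) ℂ) (z : Fin 3 → ℂ) (t : ℂ) :
    Matrix (Fin 4) (Fin 4) ℂ :=
  Matrix.of fun i j =>
    if hi : (i : ℕ) < 3 then
      if hj : (j : ℕ) < 3 then τ' ⟨i, hi⟩ ⟨j, hj⟩ else z ⟨i, hi⟩
    else
      if hj : (j : ℕ) < 3 then z ⟨j, hj⟩ else t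

/-- `R_{μν}`, a product of eight genus-4 theta constants. -/
def Rmn (μ ν : ℤ) (τ : Matrix (Fin 4) (Fin 4) ℂ) : ℂ :=
  ∏ α : Fin 2, ∏ β : Fin 2, ∏ γ : Fin 2,
    thetaNull 4 ![μ, 0, 0, 0] ![ν, (α : ℕ), (β : ℕ), (γ : ℕ)] τ

/-- The Schottky form `J₈` on `ℍ₄`. -/
def J8 (τ : Matrix (Fin 4) (Fin 4) ℂ) : ℂ :=
  (Rmn 0 0 τ ^ 2 + Rmn 0 1 τ ^ 2 + Rmn 1 0 τ ^ 2 -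
      2 * (Rmn 0 0 τ * Rmn 0 1 τ + Rmn 0 0 τ * Rmn 1 0 τ + Rmn 0 1 τ * Rmn 1 0 τ)) / 2 ^ 16

/-- `r_{μν}`, a product of four genus-3 theta constants. -/
def rmn (μ ν : ℤ) (τ : Matrix (Fin 3) (Fin 3) ℂ) : ℂ :=
  ∏ α : Fin 2, ∏ β : Fin 2, thetaNull 3 ![μ, 0, 0] ![ν, (α : ℕ), (β : ℕ)] τ

/-- `s_{μν}(τ, z)`, a sum of four squares of quotients of theta functions. -/
def smn (μ ν : ℤ) (τ : Matrix (Fin 3) (Fin 3) ℂ) (z : Fin 3 → ℂ) : ℂ :=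
  ∑ α : Fin 2, ∑ β : Fin 2,
    (thetaFn 3 ![μ, 0, 0] ![ν, (α : ℕ), (β : ℕ)] τ z /
        thetaNull 3 ![μ, 0, 0] ![ν, (α : ℕ), (β : ℕ)] τ) ^ 2

/-- Partial derivative of a function of `z ∈ ℂ³` in the `i`-th coordinate. -/
def pd (i : Fin 3) (f : (Fin 3 → ℂ) → ℂ) : (Fin 3 → ℂ) → ℂ :=
  fun z => deriv (fun w : ℂ => f (Function.update z i w)) (z i)

/-- Iterated partial derivative `∂^{I₀+I₁+I₂}/∂z₁^{I₀}∂z₂^{I₁}∂z₃^{I₂}`. -/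
def pdMulti (I : Fin 3 → ℕ) (f : (Fin 3 → ℂ) → ℂ) : (Fin 3 → ℂ) → ℂ :=
  (pd 0)^[I 0] <| (pd 1)^[I 1] <| (pd 2)^[I 2] f

/-- The coordinate `c_I` of `χ_{4,0,8}`, defined as the limit
`lim_{t → ∞} e^{2πt} ∂⁴_I J₈([[τ, zᵀ],[z, it]])|_{z=0}`. -/
def cI (I : Fin 3 → ℕ) (τ : Matrix (Fin 3) (Fin 3) ℂ) : ℂ :=
  limUnder Filter.atTop fun t : ℝ =>
    (Real.exp (2 * Real.pi * t) : ℂ) *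
      pdMulti I (fun z => J8 (blk τ z (Complex.I * (t : ℂ)))) 0

/-- `χ_{4,0,8}(τ)` as a quartic form in `x = (x₁, x₂, x₃)`. -/
def chi408 (τ : Matrix (Fin 3) (Fin 3) ℂ) (x : Fin 3 → ℂ) : ℂ :=
  ∑ I ∈ Finset.Nat.antidiagonalTuple 3 4,
    cI I τ * (∏ i, x i ^ I i) / ∏ i, ((I i).factorial : ℂ)

/-- `χ₁₈`, the product of the 36 even theta constants of genus 3. -/
def chi18 (τ : Matrix (Fin 3) (Fin 3) ℂ) : ℂ :=
  ∏ a : Fin 3 → Fin 2, ∏ b : Fin 3 → Fin 2,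
    if Even (∑ i, (a i : ℕ) * (b i : ℕ)) then
      thetaNull 3 (fun i => ((a i : ℕ) : ℤ)) (fun i => ((b i : ℕ) : ℤ)) τ
    else 1

/-- An element of `Sp(6, ℤ)` in block form `[[a, b], [c, d]]`, i.e. four integer
`3 × 3` matrices satisfying the standard symplectic relations. -/
structure Sp6 : Type where
  a : Matrix (Fin 3) (Fin 3) ℤ
  b : Matrix (Fin 3) (Fin 3) ℤ
  c : Matrix (Fin 3) (Fin 3) ℤ
  d : Matrix (Fin 3) (Fin 3) ℤ
  hac : aᵀ * c = cᵀ * a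
  hbd : bᵀ * d = dᵀ * b
  had : aᵀ * d - cᵀ * b = 1

/-- Integer matrix viewed as a complex matrix. -/
def mc (m : Matrix (Fin 3) (Fin 3) ℤ) : Matrix (Fin 3) (Fin 3) ℂ :=
  m.map fun x => (x : ℂ)

/-- The automorphy factor `cτ + d`. -/
def jmat (γ : Sp6) (τ : Matrix (Fin 3) (Fin 3) ℂ) : Matrix (Fin 3) (Fin 3) ℂ :=
  mc γ.c * τ + mc γ.d

/-- The action `γ · τ = (aτ + b)(cτ + d)⁻¹` of `Sp(6, ℤ)` on `ℍ₃`. -/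
def spAct (γ : Sp6) (τ : Matrix (Fin 3) (Fin 3) ℂ) : Matrix (Fin 3) (Fin 3) ℂ :=
  (mc γ.a * τ + mc γ.b) * (jmat γ τ)⁻¹

/-- The matrix `E₃₃` with `(3,3)` entry `1` and all other entries `0`. -/
def E33 : Matrix (Fin 3) (Fin 3) ℂ := Matrix.single 2 2 1

/-- Derivative of a function on `ℍ₃` with respect to the symmetric coordinate `τ_{ab}`. -/
def mdOp (a b : Fin 3) (f : Matrix (Fin 3) (Fin 3) ℂ → ℂ) :
    Matrix (Fin 3) (Fin 3) ℂ → ℂ :=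
  fun τ => deriv (fun w : ℂ =>
    f (τ + w • (Matrix.single a b (1 : ℂ) + Matrix.single b a 1))) 0

/-- Multi-indices of ternary-quartic monomials: `I : Fin 3 → ℕ` with `∑ I = 4`. -/
abbrev QIdx : Type := {I : Fin 3 → ℕ // I ∈ Finset.Nat.antidiagonalTuple 3 4}

/-- Multi-indices of ternary-quadratic monomials. -/
abbrev C2Idx : Type := {I : Fin 3 → ℕ // I ∈ Finset.Nat.antidiagonalTuple 3 2}

/-- The ternary quartic with (normalized) coefficient vector `aa`, evaluated at `v`. -/
def quarticEval (aa : QIdx → ℂ) (v : Fin 3 → ℂ) : ℂ :=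
  ∑ I : QIdx, ((Nat.factorial 4 : ℂ) / ∏ i, ((I.1 i).factorial : ℂ)) * aa I * ∏ i, v i ^ I.1 i

/-- A ternary quadratic form with coefficient vector `bb`, evaluated at `v`. -/
def quadEval (bb : C2Idx → ℂ) (v : Fin 3 → ℂ) : ℂ :=
  ∑ I : C2Idx, bb I * ∏ i, v i ^ I.1 i

/-- The second exterior power of a `3 × 3` matrix in the basis
`e₂∧e₃, e₃∧e₁, e₁∧e₂`. -/
def lam2 (M : Matrix (Fin 3) (Fin 3) ℂ) : Matrix (Fin 3) (Fin 3) ℂ :=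
  Matrix.of fun i j =>
    M (i + 1) (j + 1) * M (i + 2) (j + 2) - M (i + 1) (j + 2) * M (i + 2) (j + 1)

/-- Variables of a concomitant: the 15 coefficients `a_I`, the variables `x`, and `x̂`. -/
abbrev ConcVar : Type := QIdx ⊕ (Fin 3 ⊕ Fin 3)

/-- Evaluation of a concomitant (as polynomial) at coefficients `aa` and vectors `x`, `x̂`. -/
def evalConc (c : MvPolynomial ConcVar ℂ) (aa : QIdx → ℂ) (x xh : Fin 3 → ℂ) : ℂ :=
  MvPolynomial.eval (Sum.elim aa (Sum.elim x xh)) c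

/-- `c` is a concomitant of ternary quartics of degree `d` and bidegree `(i, j)`:
it is trihomogeneous of degrees `d`, `i`, `j` in the coefficients, in `x`, and in `x̂`,
and it is `SL(3, ℂ)`-equivariant. -/
structure IsConcomitant (c : MvPolynomial ConcVar ℂ) (d i j : ℕ) : Prop where
  homA : c.IsWeightedHomogeneous (Sum.elim (fun _ => 1) fun _ => 0) d
  homX : c.IsWeightedHomogeneous (Sum.elim (fun _ => 0) (Sum.elim (fun _ => 1) fun _ => 0)) i
  homXh : c.IsWeightedHomogeneous (Sum.elim (fun _ => 0) (Sum.elim (fun _ => 0) fun _ => 1)) j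
  equivar : ∀ A : Matrix (Fin 3) (Fin 3) ℂ, A.det = 1 →
    ∀ aa aa' : QIdx → ℂ,
      (∀ v : Fin 3 → ℂ, quarticEval aa' v = quarticEval aa (Aᵀ *ᵥ v)) →
      ∀ x xh : Fin 3 → ℂ,
        evalConc c aa' x xh = evalConc c aa (Aᵀ *ᵥ x) (lam2 Aᵀ *ᵥ xh)

/-- `c` vanishes to order `≥ m` along the locus of double conics: for every quartic `f`
(with coefficients `aa`) and every quadratic `g` (with coefficients `bb`, and `sq` the
coefficient vector of `g²`), `c` evaluated at the coefficients of `t·f + g²` is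
divisible by `t^m` (all `t`-derivatives of order `< m` vanish at `t = 0`). -/
def VanishesDC (c : MvPolynomial ConcVar ℂ) (m : ℕ) : Prop :=
  ∀ (aa : QIdx → ℂ) (bb : C2Idx → ℂ) (sq : QIdx → ℂ),
    (∀ v : Fin 3 → ℂ, quarticEval sq v = quadEval bb v ^ 2) →
    ∀ x xh : Fin 3 → ℂ, ∀ k : ℕ, k < m →
      iteratedDeriv k (fun t : ℂ => evalConc c (fun I => t * aa I + sq I) x xh) 0 = 0

/-- Bihomogeneous polynomials in `x` and `x̂`. -/
abbrev BiPoly : Type := MvPolynomial (Fin 3 ⊕ Fin 3) ℂ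

def evalBi (P : BiPoly) (x xh : Fin 3 → ℂ) : ℂ :=
  MvPolynomial.eval (Sum.elim x xh) P

/-- `P` is bihomogeneous of bidegree `(i, j)` in `(x, x̂)`. -/
def IsBihom (P : BiPoly) (i j : ℕ) : Prop :=
  P.IsWeightedHomogeneous (Sum.elim (fun _ => 1) fun _ => 0) i ∧
  P.IsWeightedHomogeneous (Sum.elim (fun _ => 0) fun _ => 1) j

/-- A polynomial-valued map is holomorphic on `ℍ₃` if all its coefficients are. -/
def HoloPolyMap (H : Matrix (Fin 3) (Fin 3) ℂ → BiPoly) : Prop :=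
  ∀ m : (Fin 3 ⊕ Fin 3) →₀ ℕ,
    DifferentiableOn ℂ (fun τ => MvPolynomial.coeff m (H τ)) (Hg 3)

/-- The coefficient vector of the quartic `χ_{4,0,8}(τ)`, i.e. `a_I = c_I(τ)/4!`. -/
def chiCoef (τ : Matrix (Fin 3) (Fin 3) ℂ) : QIdx → ℂ :=
  fun I => cI I.1 τ / (Nat.factorial 4 : ℂ)

/-- A Siegel modular form of degree 3 and weight `(i, j, k)`: a holomorphic map
from `ℍ₃` to the bihomogeneous polynomials of bidegree `(i, j)` with the standard
transformation law under `Sp(6, ℤ)`. -/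
def IsSiegelMF (F : Matrix (Fin 3) (Fin 3) ℂ → BiPoly) (i j : ℕ) (k : ℤ) : Prop :=
  HoloPolyMap F ∧ (∀ τ ∈ Hg 3, IsBihom (F τ) i j) ∧
  ∀ γ : Sp6, ∀ τ ∈ Hg 3, ∀ x xh : Fin 3 → ℂ,
    evalBi (F (spAct γ τ)) x xh =
      (jmat γ τ).det ^ k *
        evalBi (F τ) ((jmat γ τ)ᵀ *ᵥ x) (lam2 (jmat γ τ)ᵀ *ᵥ xh)

/-- `F` vanishes to order `≥ n` along the divisor `D` at infinity. -/
def VanishesAtInfinity (F : Matrix (Fin 3) (Fin 3) ℂ → BiPoly) (n : ℤ) : Prop :=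
  ∀ τ ∈ Hg 3, ∃ B : ℝ, ∀ t : ℝ, 0 ≤ t → ∀ m : (Fin 3 ⊕ Fin 3) →₀ ℕ,
    ‖MvPolynomial.coeff m (F (τ + (Complex.I * (t : ℂ)) • E33))‖ *
      Real.exp (2 * Real.pi * n * t) ≤ B

/-- `χ_{4,0,8}(τ)` as a bihomogeneous polynomial of bidegree `(4, 0)`. -/
def chi408Poly (τ : Matrix (Fin 3) (Fin 3) ℂ) : BiPoly :=
  ∑ I : QIdx,
    MvPolynomial.C (cI I.1 τ / ∏ i, ((I.1 i).factorial : ℂ)) *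
      ∏ i, (MvPolynomial.X (Sum.inl i) : BiPoly) ^ I.1 i

/-!
Pair the four theta constants of `r_{μν}` as `(α, β) = (0,0), (1,1)` and `(0,1), (1,0)` and apply
the duplication formula `θ[a;b](τ) θ[a;b'](τ) = ∑_{s ∈ {0,1}³} θ[s;b+b'](2τ) θ[s+a;b-b'](2τ)`,
which comes from the substitution `(l, m) = (p + q + s, p - q - a)` and the parallelogram law for
the quadratic form `τ`. Reducing the characteristics mod 2, each `r_{μν}` becomes a product of two
signed sums of the constants `A_{st} = θ[(s,t,t);(0,1,1)](2τ)`, the other ones having odd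
characteristic. With `x_{st} = A_{st}²`,
`r₀₀ = (x₀₀ + x₁₀)² - (x₀₁ + x₁₁)²`, `r₀₁ = (x₀₀ - x₁₀)² - (x₀₁ - x₁₁)²`,
`r₁₀ = 4 (x₀₀ x₁₀ - x₀₁ x₁₁)`, and the relation is `(p + q)² - (p - q)² = 4pq`.
-/

open Real

theorem summable_exp_neg_mul_sq_int_add {c : ℝ} (hc : 0 < c) (v : ℝ) :
    Summable fun n : ℤ => rexp (-c * (n + v) ^ 2) := by
  have hτ : 0 < (I * (c / π : ℝ)).im := by simpa using div_pos hc pi_pos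
  refine (((summable_jacobiTheta₂_term_iff (I * (c * v / π : ℝ)) _).mpr hτ).norm.mul_left
    (rexp (-c * v ^ 2))).congr fun n => ?_
  rw [norm_jacobiTheta₂_term, ← Real.exp_add]
  congr 1
  simp only [mul_im, I_re, I_im, ofReal_re, ofReal_im]
  field_simp
  ring

theorem summable_fin_pi_prod_of_nonneg {α : Type*} {n : ℕ} {f : Fin n → α → ℝ}
    (hf0 : ∀ i x, 0 ≤ f i x) (hf : ∀ i, Summable (f i)) :
    Summable fun x : Fin n → α => ∏ i, f i (x i) := by
  induction n with
  | zero => exact (hasSum_unique _).summable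
  | succ n ih =>
    refine (Fin.consEquiv fun _ => α).summable_iff.mp ?_
    simp only [Function.comp_def, Fin.consEquiv_apply, Fin.prod_univ_succ, Fin.cons_zero,
      Fin.cons_succ]
    have ih' : Summable fun y : Fin n → α => ∏ i : Fin n, f i.succ (y i) :=
      ih (fun i => hf0 i.succ) fun i => hf i.succ
    exact Summable.mul_of_nonneg (f := f 0)
      (g := fun y : Fin n → α => ∏ i : Fin n, f i.succ (y i)) (hf 0) ih' (fun x => hf0 0 x)
      fun y => Finset.prod_nonneg fun i _ => hf0 i.succ (y i)

theorem Matrix.PosDef.exists_pos_mul_sum_sq_le {ι : Type*} [Fintype ι] {Y : Matrix ι ι ℝ}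
    (hY : Y.PosDef) : ∃ c > 0, ∀ x : ι → ℝ, c * ∑ i, x i ^ 2 ≤ x ⬝ᵥ Y *ᵥ x := by
  rcases isEmpty_or_nonempty ι with _ | _
  · exact ⟨1, one_pos, fun x => by simp⟩
  -- `q` is 2-homogeneous and attains a positive minimum on the sup-norm unit sphere
  set q : (ι → ℝ) → ℝ := fun x => x ⬝ᵥ Y *ᵥ x
  have hq : Continuous q := by fun_prop
  obtain ⟨x₀, hx₀, hmin⟩ := (isCompact_sphere (0 : ι → ℝ) 1).exists_isMinOn
    (NormedSpace.sphere_nonempty.mpr zero_le_one) hq.continuousOn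
  have hx₀ne : x₀ ≠ 0 := ne_zero_of_mem_unit_sphere ⟨x₀, hx₀⟩
  have hpos : 0 < q x₀ := by simpa using hY.dotProduct_mulVec_pos hx₀ne
  have hcard : (0 : ℝ) < Fintype.card ι := by exact_mod_cast Fintype.card_pos
  refine ⟨q x₀ / Fintype.card ι, by positivity, fun x => ?_⟩
  have hsum : ∑ i, x i ^ 2 ≤ Fintype.card ι * ‖x‖ ^ 2 := by
    calc ∑ i, x i ^ 2 ≤ ∑ _i : ι, ‖x‖ ^ 2 := Finset.sum_le_sum fun i _ =>
          sq_le_sq' (abs_le.mp (norm_le_pi_norm x i)).1 (abs_le.mp (norm_le_pi_norm x i)).2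
      _ = Fintype.card ι * ‖x‖ ^ 2 := by simp
  have hhom : ∀ t : ℝ, q (t • x) = t ^ 2 * q x := fun t => by
    simp only [q, mulVec_smul, smul_dotProduct, dotProduct_smul, smul_eq_mul]; ring
  have hlow : q x₀ * ‖x‖ ^ 2 ≤ q x := by
    rcases eq_or_ne x 0 with rfl | hx
    · simp [q]
    · have hnx : 0 < ‖x‖ := norm_pos_iff.mpr hx
      have hmem : ‖x‖⁻¹ • x ∈ Metric.sphere (0 : ι → ℝ) 1 := by
        simp [norm_smul, hnx.ne']
      have := hmin hmem
      rw [Set.mem_ofPred_eq, hhom] at this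
      calc q x₀ * ‖x‖ ^ 2 ≤ ‖x‖⁻¹ ^ 2 * q x * ‖x‖ ^ 2 := by gcongr
        _ = q x := by field_simp
  calc q x₀ / Fintype.card ι * ∑ i, x i ^ 2
      ≤ q x₀ / Fintype.card ι * (Fintype.card ι * ‖x‖ ^ 2) := by gcongr
    _ = q x₀ * ‖x‖ ^ 2 := by field_simp
    _ ≤ q x := hlow

theorem Fin.sum_univ_pi_succ {β M : Type*} [Fintype β] [AddCommMonoid M] {n : ℕ}
    (f : (Fin (n + 1) → β) → M) :
    ∑ s, f s = ∑ x, ∑ y : Fin n → β, f (Matrix.vecCons x y) := by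
  rw [← (Fin.consEquiv fun _ => β).sum_comp, Fintype.sum_prod_type]
  rfl

theorem ZMod.sum_univ_two {M : Type*} [AddCommMonoid M] (f : ZMod 2 → M) :
    ∑ x, f x = f 0 + f 1 :=
  Fin.sum_univ_two f

namespace SiegelTheta

variable {g : ℕ}

def charPt (a l : Fin g → ℤ) : Fin g → ℂ := fun i => l i + a i / 2

def thetaSummand (τ : Matrix (Fin g) (Fin g) ℂ) (x β : Fin g → ℂ) : ℂ :=
  cexp (π * I * (x ⬝ᵥ τ *ᵥ x + x ⬝ᵥ β))

theorem thetaNull_eq_tsum (a b : Fin g → ℤ) (τ : Matrix (Fin g) (Fin g) ℂ) :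
    thetaNull g a b τ = ∑' l, thetaSummand τ (charPt a l) (b ·) := by
  refine tsum_congr fun l => ?_
  rw [thetaSummand, mul_add, Complex.exp_add]
  congr 2
  · simp [dotProduct, mulVec, charPt, Finset.mul_sum, mul_assoc]
  · simp [dotProduct, charPt, Finset.mul_sum]; ring_nf

theorem thetaSummand_add_mul_sub (τ : Matrix (Fin g) (Fin g) ℂ) (u v β β' : Fin g → ℂ) :
    thetaSummand τ (u + v) β * thetaSummand τ (u - v) β' =
      thetaSummand ((2 : ℂ) • τ) u (β + β') * thetaSummand ((2 : ℂ) • τ) v (β - β') := by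
  simp only [thetaSummand, ← Complex.exp_add, smul_mulVec, mulVec_add, mulVec_sub,
    add_dotProduct, sub_dotProduct, dotProduct_add, dotProduct_sub, dotProduct_smul, smul_eq_mul]
  ring_nf

theorem thetaSummand_add_right (τ : Matrix (Fin g) (Fin g) ℂ) (x β γ : Fin g → ℂ) :
    thetaSummand τ x (β + γ) = thetaSummand τ x β * cexp (π * I * (x ⬝ᵥ γ)) := by
  simp only [thetaSummand, ← Complex.exp_add, dotProduct_add]
  ring_nf

theorem thetaSummand_neg (τ : Matrix (Fin g) (Fin g) ℂ) (x β : Fin g → ℂ) :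
    thetaSummand τ (-x) β = thetaSummand τ x β * cexp (-(2 * π * I * (x ⬝ᵥ β))) := by
  simp only [thetaSummand, ← Complex.exp_add, neg_dotProduct, mulVec_neg, dotProduct_neg]
  ring_nf

theorem cexp_two_pi_I_mul_charPt_dotProduct (a l e : Fin g → ℤ) :
    cexp (2 * π * I * (charPt a l ⬝ᵥ (e ·))) = (-1) ^ (a ⬝ᵥ e) := by
  have h : 2 * π * I * (charPt a l ⬝ᵥ (e ·)) =
      (l ⬝ᵥ e : ℤ) * (2 * π * I) + (a ⬝ᵥ e : ℤ) * (π * I) := by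
    simp only [charPt, dotProduct, Int.cast_sum, Int.cast_mul, Finset.mul_sum, Finset.sum_mul,
      ← Finset.sum_add_distrib]
    refine Finset.sum_congr rfl fun i _ => ?_
    ring
  rw [h, Complex.exp_add, Complex.exp_int_mul_two_pi_mul_I, Complex.exp_int_mul,
    Complex.exp_pi_mul_I, one_mul]

theorem charPt_add_two_smul (a e l : Fin g → ℤ) : charPt (a + 2 • e) l = charPt a (l + e) := by
  funext i; simp [charPt]; ring

theorem thetaNull_add_two_smul_left (a e b : Fin g → ℤ) (τ : Matrix (Fin g) (Fin g) ℂ) :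
    thetaNull g (a + 2 • e) b τ = thetaNull g a b τ := by
  simp only [thetaNull_eq_tsum, charPt_add_two_smul]
  exact (Equiv.addRight e).tsum_eq fun l => thetaSummand τ (charPt a l) (b ·)

theorem thetaNull_add_two_smul_right (a b e : Fin g → ℤ) (τ : Matrix (Fin g) (Fin g) ℂ) :
    thetaNull g a (b + 2 • e) τ = (-1) ^ (a ⬝ᵥ e) * thetaNull g a b τ := by
  simp only [thetaNull_eq_tsum, ← tsum_mul_left]
  refine tsum_congr fun l => ?_
  have h : (fun i => (((b + 2 • e) i : ℤ) : ℂ)) =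
      (fun i => (b i : ℂ)) + (2 : ℂ) • fun i => (e i : ℂ) := by
    funext i; simp
  rw [h, thetaSummand_add_right, dotProduct_smul, smul_eq_mul, ← mul_assoc,
    mul_right_comm _ I, mul_comm _ (2 : ℂ), cexp_two_pi_I_mul_charPt_dotProduct, mul_comm]

theorem thetaNull_eq_zero_of_odd {a b : Fin g → ℤ} (h : Odd (a ⬝ᵥ b))
    (τ : Matrix (Fin g) (Fin g) ℂ) : thetaNull g a b τ = 0 := by
  let e : Equiv.Perm (Fin g → ℤ) :=
    Function.Involutive.toPerm (fun l => -l - a) fun l => by simp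
  have hneg : ∀ l,
      thetaSummand τ (charPt a (e l)) (b ·) = -thetaSummand τ (charPt a l) (b ·) := by
    intro l
    have hx : charPt a (e l) = -charPt a l := by
      show charPt a (-l - a) = _
      funext i; simp [charPt]; ring
    rw [hx, thetaSummand_neg, Complex.exp_neg, cexp_two_pi_I_mul_charPt_dotProduct, h.neg_one_zpow]
    simp
  have := e.tsum_eq fun l => thetaSummand τ (charPt a l) (b ·)
  simp only [hneg, tsum_neg, ← thetaNull_eq_tsum] at this
  linear_combination -this / 2

theorem norm_thetaSummand_charPt (τ : Matrix (Fin g) (Fin g) ℂ) (a b l : Fin g → ℤ) :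
    ‖thetaSummand τ (charPt a l) (b ·)‖ =
      rexp (-π * ((fun i => (l i : ℝ) + a i / 2) ⬝ᵥ
        (of fun i j => (τ i j).im) *ᵥ fun i => (l i : ℝ) + a i / 2)) := by
  have hx : charPt a l = fun i => (((l i : ℝ) + a i / 2 : ℝ) : ℂ) := by
    funext i; simp [charPt]
  rw [thetaSummand, Complex.norm_exp, hx]
  congr 1
  simp [dotProduct, mulVec, Complex.im_sum, Finset.mul_sum]

theorem summable_norm_thetaSummand_charPt {τ : Matrix (Fin g) (Fin g) ℂ}
    (hY : (of fun i j => (τ i j).im).PosDef) (a b : Fin g → ℤ) :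
    Summable fun l => ‖thetaSummand τ (charPt a l) (b ·)‖ := by
  obtain ⟨c, hc, hcY⟩ := hY.exists_pos_mul_sum_sq_le
  refine Summable.of_nonneg_of_le (fun _ => norm_nonneg _) (fun l => ?_)
    (summable_fin_pi_prod_of_nonneg (f := fun i (n : ℤ) => rexp (-(π * c) * (n + a i / 2) ^ 2))
      (fun _ _ => (exp_pos _).le) fun i => summable_exp_neg_mul_sq_int_add (by positivity) _)
  rw [norm_thetaSummand_charPt, ← Real.exp_sum, Real.exp_le_exp, ← Finset.mul_sum]
  nlinarith [pi_pos, hcY fun i => (l i : ℝ) + a i / 2]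

def liftChar (s : Fin g → ZMod 2) : Fin g → ℤ := fun i => (s i).val

def doublingEquiv (a : Fin g → ℤ) :
    (Fin g → ZMod 2) × (Fin g → ℤ) × (Fin g → ℤ) ≃ (Fin g → ℤ) × (Fin g → ℤ) where
  toFun x := (x.2.1 + x.2.2 + liftChar x.1, x.2.1 - x.2.2 - a)
  -- `l + m + a = 2p + s` and `l - m - a = 2q + s`
  invFun y := (fun i => ((y.1 i + y.2 i + a i : ℤ) : ZMod 2),
    fun i => (y.1 i + y.2 i + a i) / 2, fun i => (y.1 i - y.2 i - a i) / 2)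
  left_inv := by
    rintro ⟨s, p, q⟩
    have hs : ∀ i, ((s i).val : ℤ) < 2 := fun i => by exact_mod_cast (s i).val_lt
    have h2 : (2 : ZMod 2) = 0 := rfl
    refine Prod.ext (funext fun i => ?_) (Prod.ext (funext fun i => ?_) (funext fun i => ?_))
    · simp only [Pi.add_apply, Pi.sub_apply, liftChar]
      push_cast
      simp only [ZMod.natCast_val, ZMod.cast_id', id]
      linear_combination (p i : ZMod 2) * h2
    all_goals simp only [Pi.add_apply, Pi.sub_apply, liftChar]; have := hs i; omega
  right_inv := by
    rintro ⟨l, m⟩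
    refine Prod.ext (funext fun i => ?_) (funext fun i => ?_)
    · simp only [Pi.add_apply, liftChar, ZMod.val_intCast]; omega
    · simp only [Pi.sub_apply]; omega

theorem thetaNull_mul_thetaNull {τ : Matrix (Fin g) (Fin g) ℂ}
    (hY : (of fun i j => (τ i j).im).PosDef) (a b b' : Fin g → ℤ) :
    thetaNull g a b τ * thetaNull g a b' τ =
      ∑ s, thetaNull g (liftChar s) (b + b') ((2 : ℂ) • τ) *
        thetaNull g (liftChar s + a) (b - b') ((2 : ℂ) • τ) := by
  have hY2 : (of fun i j => (((2 : ℂ) • τ) i j).im).PosDef := by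
    convert hY.smul (two_pos (α := ℝ)) using 1
    ext i j; simp
  let F : (Fin g → ℤ) × (Fin g → ℤ) → ℂ := fun lm =>
    thetaSummand τ (charPt a lm.1) (b ·) * thetaSummand τ (charPt a lm.2) (b' ·)
  have hF : Summable (F ∘ doublingEquiv a) := (doublingEquiv a).summable_iff.mpr <|
    summable_mul_of_summable_norm (f := fun l => thetaSummand τ (charPt a l) (b ·))
      (g := fun m => thetaSummand τ (charPt a m) (b' ·))
      (summable_norm_thetaSummand_charPt hY a b) (summable_norm_thetaSummand_charPt hY a b')
  have hdup : ∀ s p q, F (doublingEquiv a (s, p, q)) =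
      thetaSummand ((2 : ℂ) • τ) (charPt (liftChar s) p) ((b + b') ·) *
        thetaSummand ((2 : ℂ) • τ) (charPt (liftChar s + a) q) ((b - b') ·) := by
    intro s p q
    have hu : charPt a (p + q + liftChar s) =
        charPt (liftChar s) p + charPt (liftChar s + a) q := by
      funext i; simp [charPt]; ring
    have hv : charPt a (p - q - a) = charPt (liftChar s) p - charPt (liftChar s + a) q := by
      funext i; simp [charPt]; ring
    have hβ : (fun i => (((b + b') i : ℤ) : ℂ)) = (fun i => (b i : ℂ)) + fun i => (b' i : ℂ) :=
      funext fun i => by simp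
    have hβ' : (fun i => (((b - b') i : ℤ) : ℂ)) = (fun i => (b i : ℂ)) - fun i => (b' i : ℂ) :=
      funext fun i => by simp
    simp only [F, doublingEquiv, Equiv.coe_fn_mk, hu, hv, thetaSummand_add_mul_sub, hβ, hβ']
  calc thetaNull g a b τ * thetaNull g a b' τ = ∑' lm, F lm := by
        rw [thetaNull_eq_tsum, thetaNull_eq_tsum, tsum_mul_tsum_of_summable_norm
          (summable_norm_thetaSummand_charPt hY a b) (summable_norm_thetaSummand_charPt hY a b')]
    _ = ∑ s, ∑' pq : (Fin g → ℤ) × (Fin g → ℤ), F (doublingEquiv a (s, pq)) := by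
        rw [← (doublingEquiv a).tsum_eq, ← Function.comp_def F, hF.tsum_prod' hF.prod_factor,
          tsum_fintype]
        rfl
    _ = _ := by
        refine Finset.sum_congr rfl fun s _ => ?_
        rw [thetaNull_eq_tsum, thetaNull_eq_tsum, tsum_mul_tsum_of_summable_norm
          (summable_norm_thetaSummand_charPt hY2 _ _) (summable_norm_thetaSummand_charPt hY2 _ _)]
        exact tsum_congr fun pq => hdup s pq.1 pq.2

theorem liftChar_cons (x : ZMod 2) (s : Fin g → ZMod 2) :
    liftChar (vecCons x s) = vecCons (x.val : ℤ) (liftChar s) := by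
  funext i; cases i using Fin.cases <;> rfl

theorem thetaNull_mul_thetaNull_of_add_of_sub {τ : Matrix (Fin g) (Fin g) ℂ}
    (hY : (of fun i j => (τ i j).im).PosDef) {a b b' β c c' : Fin g → ℤ}
    (hc : b + b' = β + 2 • c) (hc' : b - b' = β + 2 • c') :
    thetaNull g a b τ * thetaNull g a b' τ =
      ∑ s, (-1) ^ (liftChar s ⬝ᵥ c + (liftChar s + a) ⬝ᵥ c') *
        (thetaNull g (liftChar s) β ((2 : ℂ) • τ) *
          thetaNull g (liftChar s + a) β ((2 : ℂ) • τ)) := by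
  rw [thetaNull_mul_thetaNull hY, hc, hc']
  refine Finset.sum_congr rfl fun s _ => ?_
  rw [thetaNull_add_two_smul_right, thetaNull_add_two_smul_right, zpow_add₀ (by norm_num)]
  ring

theorem rmn_eq_sum_mul_sum {τ : Matrix (Fin 3) (Fin 3) ℂ}
    (hY : (of fun i j => (τ i j).im).PosDef) (μ ν : ℤ) :
    rmn μ ν τ =
      (∑ s, (-1) ^ (liftChar s ⬝ᵥ ![ν, 0, 0] + (liftChar s + ![μ, 0, 0]) ⬝ᵥ ![0, -1, -1]) *
        (thetaNull 3 (liftChar s) ![0, 1, 1] ((2 : ℂ) • τ) *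
          thetaNull 3 (liftChar s + ![μ, 0, 0]) ![0, 1, 1] ((2 : ℂ) • τ))) *
      (∑ s, (-1) ^ (liftChar s ⬝ᵥ ![ν, 0, 0] + (liftChar s + ![μ, 0, 0]) ⬝ᵥ ![0, -1, 0]) *
        (thetaNull 3 (liftChar s) ![0, 1, 1] ((2 : ℂ) • τ) *
          thetaNull 3 (liftChar s + ![μ, 0, 0]) ![0, 1, 1] ((2 : ℂ) • τ))) := by
  rw [← thetaNull_mul_thetaNull_of_add_of_sub hY (b := ![ν, 0, 0]) (b' := ![ν, 1, 1]),
    ← thetaNull_mul_thetaNull_of_add_of_sub hY (b := ![ν, 0, 1]) (b' := ![ν, 1, 0])]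
  · simp only [rmn, Fin.prod_univ_two]
    norm_num
    ring
  all_goals ext i; fin_cases i <;> simp <;> ring

end SiegelTheta

/-- Relation (6): `r₀₀ = r₀₁ + r₁₀` on `ℍ₃`. -/
theorem statement_1 (τ : Matrix (Fin 3) (Fin 3) ℂ) (hτ : τ ∈ Hg 3) :
    rmn 0 0 τ = rmn 0 1 τ + rmn 1 0 τ := by
  simp only [SiegelTheta.rmn_eq_sum_mul_sum hτ.2, Fin.sum_univ_pi_succ, Fintype.sum_unique,
    ZMod.sum_univ_two, SiegelTheta.liftChar_cons, ZMod.val_zero, ZMod.val_one, Matrix.empty_eq]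
  have hshift (t : ℤ) : thetaNull 3 ![2, t, t] ![0, 1, 1] ((2 : ℂ) • τ) =
      thetaNull 3 ![0, t, t] ![0, 1, 1] ((2 : ℂ) • τ) := by
    simpa using
      SiegelTheta.thetaNull_add_two_smul_left ![0, t, t] ![1, 0, 0] ![0, 1, 1] ((2 : ℂ) • τ)
  simp [SiegelTheta.thetaNull_eq_zero_of_odd, hshift]
  ring
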